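/- Let F : A → B be a right exact additive functor between additive categories with cokernels. Then the set of morphisms in A sent to isomorphisms by F is a severe right Ore set: it contains all isomorphisms, is closed under composition, is closed under pushouts, and if F(s) is an isomorphism and s ∘ a = 0 then F applied to the cokernel map of a is an isomorphism. -/

import Mathlib

/-!
An additive functor carries the biproduct `B ⊞ C'` to a biproduct, and right exactness makes
`F` of the pushout a cokernel of `(F s, F a)`; in a preadditive category such a pushout of an
isomorphism is again an isomorphism. For the last property, `F s ≫ F a = 0` with `F s`
invertible forces `F a = 0`, and the cokernel map of a zero morphism is an isomorphism.
-/

open CategoryTheory CategoryTheory.Limits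

universe v v' u u'

noncomputable def pushoutAlong {C : Type u} [Category.{v} C] [Preadditive C]
    [HasCokernels C] [HasBinaryBiproducts C]
    {A B C' : C} (s : A ⟶ B) (a : A ⟶ C') :
    C' ⟶ cokernel (biprod.lift s a) :=
  biprod.inr ≫ cokernel.π (biprod.lift s a)

namespace CategoryTheory.Limits

open Preadditive

lemma BinaryBicone.isIso_inr_comp_π_of_isColimit {C : Type u} [Category.{v} C] [Preadditive C]
    {A B C' : C} {s : A ⟶ B} [IsIso s] {a : A ⟶ C'} (b : BinaryBicone B C')
    (hb : b.fst ≫ b.inl + b.snd ≫ b.inr = 𝟙 b.pt) {f : A ⟶ b.pt}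
    (hf : f = s ≫ b.inl + a ≫ b.inr) {c : CokernelCofork f} (hc : IsColimit c) :
    IsIso (b.inr ≫ c.π) := by
  subst hf
  -- `k` kills `(s, a)` and retracts `inr`, so it descends to the inverse of `inr ≫ π`.
  let k : b.pt ⟶ C' := b.snd - b.fst ≫ inv s ≫ a
  have hk : (s ≫ b.inl + a ≫ b.inr) ≫ k = 0 := by simp [k]
  have hk_inr : k ≫ b.inr = 𝟙 b.pt - b.fst ≫ inv s ≫ (s ≫ b.inl + a ≫ b.inr) := by
    simp [k, ← hb]
  let δ := hc.desc (CokernelCofork.ofπ k hk)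
  have hπδ : c.π ≫ δ = k := Cofork.IsColimit.π_desc hc
  refine ⟨δ, by simp [hπδ, k], Cofork.IsColimit.hom_ext hc ?_⟩
  rw [reassoc_of% hπδ, reassoc_of% hk_inr, sub_comp, Category.assoc, Category.assoc,
    CokernelCofork.condition]
  simp

end CategoryTheory.Limits

/-- Let `F : C ⥤ D` be a right exact additive functor between additive categories with
cokernels.  Then the class of morphisms sent to isomorphisms by `F` is a severe right Ore
set: it contains all isomorphisms, is closed under composition, is closed under pushouts,
and if `F s` is an isomorphism and `s ≫ a = 0` then `F` applied to the cokernel map of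
`a` is an isomorphism. -/
theorem inverted_morphisms_severe_right_ore
    {C : Type u} [Category.{v} C] [Preadditive C] [HasCokernels C] [HasBinaryBiproducts C]
    {D : Type u'} [Category.{v'} D] [Preadditive D]
    (F : C ⥤ D) [F.Additive]
    (hF : ∀ ⦃A B : C⦄ (f : A ⟶ B),
      Nonempty (IsColimit (CokernelCofork.ofπ (f := F.map f) (F.map (cokernel.π f))
        (by rw [← F.map_comp, cokernel.condition, Functor.map_zero])))) :
    (∀ ⦃A B : C⦄ (f : A ⟶ B), IsIso f → IsIso (F.map f)) ∧
    (∀ ⦃A B B' : C⦄ (f : A ⟶ B) (g : B ⟶ B'),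
      IsIso (F.map f) → IsIso (F.map g) → IsIso (F.map (f ≫ g))) ∧
    (∀ ⦃A B C' : C⦄ (s : A ⟶ B) (a : A ⟶ C'),
      IsIso (F.map s) → IsIso (F.map (pushoutAlong s a))) ∧
    (∀ ⦃A B C' : C⦄ (s : A ⟶ B) (a : B ⟶ C'),
      IsIso (F.map s) → s ≫ a = 0 → IsIso (F.map (cokernel.π a))) := by
  refine ⟨fun _ _ _ _ ↦ inferInstance, fun _ _ _ f g _ _ ↦ by rw [F.map_comp]; infer_instance,
    fun A B C' s a _ ↦ ?_, fun A B C' s a _ hsa ↦ ?_⟩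
  · obtain ⟨hc⟩ := hF (biprod.lift s a)
    have hb := congr(F.map $(biprod.total (X := B) (Y := C')))
    have hf := congr(F.map $(biprod.lift_eq (f := s) (g := a)))
    simp only [F.map_add, F.map_comp, F.map_id] at hb hf
    rw [pushoutAlong, F.map_comp]
    exact (F.mapBinaryBicone (BinaryBiproduct.bicone B C')).isIso_inr_comp_π_of_isColimit hb hf hc
  · have hFa : F.map a = 0 := by
      rw [← cancel_epi (F.map s), ← F.map_comp, hsa, F.map_zero, comp_zero]
    obtain ⟨hc⟩ := hF a
    exact CokernelCofork.IsColimit.isIso_π _ hc hFa
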